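/- Let G be a group satisfying (H1) and (H2), and let H ∈ L(G). Then H ∩ C_G(H) = 1, and the subgroup ⟨H, C_G(H)⟩ generated by H and its centralizer contains the derived subgroup of some finite-index subgroup of G. -/

import Mathlib

variable {G : Type*} [Group G]

/-- The conjugate `B ^ g = g⁻¹ * B * g` of a subgroup `B` by an element `g`. -/
def conjBy (B : Subgroup G) (g : G) : Subgroup G :=
  B.map (MulAut.conj g⁻¹).toMonoidHom

/-- A subgroup is virtually solvable if it has a solvable subgroup of finite index. -/
def VirtSolvable (H : Subgroup G) : Prop :=
  ∃ M : Subgroup G, M ≤ H ∧ M.relIndex H ≠ 0 ∧ IsSolvable ↥M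

/-- A subgroup is virtually nilpotent if it has a nilpotent subgroup of finite index. -/
def VirtNilpotent (H : Subgroup G) : Prop :=
  ∃ M : Subgroup G, M ≤ H ∧ M.relIndex H ≠ 0 ∧ Group.IsNilpotent ↥M

/-- Hypothesis (H1): every virtually solvable subgroup whose normalizer has finite index
(i.e. belonging to `L(G)`) is trivial. -/
def HypH1 (G : Type*) [Group G] : Prop :=
  ∀ H : Subgroup G, (Subgroup.normalizer (H : Set G)).FiniteIndex → VirtSolvable H → H = ⊥

/-- Hypothesis (H2): every nontrivial normal subgroup of `G` contains the derived subgroup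
of some finite-index subgroup of `G`. -/
def HypH2 (G : Type*) [Group G] : Prop :=
  ∀ N : Subgroup G, N.Normal → N ≠ ⊥ →
    ∃ G₀ : Subgroup G, G₀.FiniteIndex ∧ ⁅G₀, G₀⁆ ≤ N

/-- `VA K H` means `K ≤va H`: `K ≤ H` and `K` contains the derived subgroup of some
finite-index subgroup of `H`. -/
def VA (K H : Subgroup G) : Prop :=
  K ≤ H ∧ ∃ A : Subgroup G, A ≤ H ∧ A.relIndex H ≠ 0 ∧ ⁅A, A⁆ ≤ K

/-- A subgroup `B` is basal if its normalizer has finite index and every conjugate of `B`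
either equals `B` or meets `B` trivially. -/
def IsBasal (B : Subgroup G) : Prop :=
  (Subgroup.normalizer (B : Set G)).FiniteIndex ∧ ∀ g : G, conjBy B g = B ∨ conjBy B g ⊓ B = ⊥

/-- The rigid normalizer `R(A)` of a basal subgroup `A`: the intersection of the
normalizers of all basal subgroups meeting `A` trivially. -/
def rigidNormalizer (A : Subgroup G) : Subgroup G :=
  ⨅ B ∈ {B : Subgroup G | IsBasal B ∧ A ⊓ B = ⊥}, Subgroup.normalizer (B : Set G)


/-!
`H ∩ C_G(H)` is abelian and normalized by `N_G(H)`, so (H1) makes it trivial.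

For the second part let `D` be the normal core of `N_G(H)` and `K = H ∩ D`; (H1) gives `K ≠ 1`
and `C_H(K) = 1`. Among the sets of conjugates of `K` that contain `K` and have nontrivial
intersection, choose one, `T`, of maximal size, and put `B = ⋂ T`. For each `g`, if `B^g` meets
`K` then `T^g ∪ {K}` is again such a set, so maximality forces `K ∈ T^g` and `B^g ≤ K ≤ H`.
Otherwise `B^g ∩ K = 1`, and since `B^g ≤ D` and `K` normalize each other they commute; as `B^g`
also normalizes `H` and `C_H(K) = 1`, this makes `B^g` centralize `H`. So the normal closure of
`B` is a nontrivial normal subgroup of `⟨H, C_G(H)⟩`, and (H2) applies to it.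
-/

open scoped Pointwise

namespace Subgroup

lemma normalizer_le_normalizer_centralizer (H : Subgroup G) :
    normalizer (H : Set G) ≤ normalizer (centralizer (H : Set G) : Set G) := by
  refine fun g hg => mem_normalizer_iff.2 fun x => ?_
  have conj_mem : ∀ h, h ∈ H ↔ g * h * g⁻¹ ∈ H := mem_normalizer_iff.1 hg
  simp only [mem_centralizer_iff]
  constructor
  · intro hx h hh
    have := hx (g⁻¹ * h * g) ((conj_mem _).2 (by simpa [mul_assoc] using hh))
    calc h * (g * x * g⁻¹) = g * ((g⁻¹ * h * g) * x) * g⁻¹ := by group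
      _ = g * (x * (g⁻¹ * h * g)) * g⁻¹ := by rw [this]
      _ = g * x * g⁻¹ * h := by group
  · intro hx h hh
    have := hx (g * h * g⁻¹) ((conj_mem h).1 hh)
    calc h * x = g⁻¹ * ((g * h * g⁻¹) * (g * x * g⁻¹)) * g := by group
      _ = g⁻¹ * ((g * x * g⁻¹) * (g * h * g⁻¹)) * g := by rw [this]
      _ = x * h := by group

lemma le_normalizer_sInf {D : Subgroup G} {T : Set (Subgroup G)}
    (h : ∀ P ∈ T, D ≤ normalizer (P : Set G)) :
    D ≤ normalizer ((sInf T : Subgroup G) : Set G) := by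
  rw [sInf_eq_iInf']
  exact (le_iInf fun P : T => h P P.2).trans (iInf_normalizer_le_normalizer_iInf _)

lemma le_normalizer_smul {D P : Subgroup G} [hD : D.Normal] (h : D ≤ normalizer (P : Set G))
    (g : ConjAct G) : D ≤ normalizer ((g • P : Subgroup G) : Set G) := by
  intro d hd
  rw [← conjAct_pointwise_smul_iff]
  have hfix : ConjAct.toConjAct (ConjAct.ofConjAct g⁻¹ * d * ConjAct.ofConjAct g) • P = P :=
    conjAct_pointwise_smul_iff.2 (h (by simpa using hD.conj_mem' d hd (ConjAct.ofConjAct g)))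
  calc ConjAct.toConjAct d • g • P
      = g • ConjAct.toConjAct (ConjAct.ofConjAct g⁻¹ * d * ConjAct.ofConjAct g) • P := by
        rw [smul_smul, smul_smul]; congr 1; simp [mul_assoc]
    _ = g • P := by rw [hfix]

lemma finite_orbit_conjAct {K : Subgroup G} (hK : (normalizer (K : Set G)).FiniteIndex) :
    (MulAction.orbit (ConjAct G) K).Finite := by
  have hle : ((normalizer (K : Set G)).comap ConjAct.ofConjAct.toMonoidHom :
      Subgroup (ConjAct G)) ≤ MulAction.stabilizer (ConjAct G) K :=
    fun g hg => conjAct_pointwise_smul_iff.2 hg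
  have hindex : ((normalizer (K : Set G)).comap ConjAct.ofConjAct.toMonoidHom).index ≠ 0 :=
    (index_comap_of_surjective _ ConjAct.ofConjAct.surjective).trans_ne hK.index_ne_zero
  refine Set.finite_of_ncard_ne_zero ?_
  rw [← MulAction.index_stabilizer]
  exact ne_zero_of_dvd_ne_zero hindex (index_dvd_of_le hle)

lemma normalClosure_le_of_forall_smul_le {B L : Subgroup G}
    (h : ∀ g : ConjAct G, g • B ≤ L) : normalClosure (B : Set G) ≤ L := by
  refine closure_le _ |>.2 fun x hx => ?_
  obtain ⟨b, hb, hbx⟩ := Group.mem_conjugatesOfSet_iff.1 hx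
  obtain ⟨c, rfl⟩ := isConj_iff.1 hbx
  exact h (ConjAct.toConjAct c)
    ((mem_smul_pointwise_iff_exists _ _ _).2 ⟨b, hb, ConjAct.toConjAct_smul c b⟩)

section Orbit

variable {α : Type*} [Group α] [MulDistribMulAction α G]

lemma smul_sInf (g : α) (T : Set (Subgroup G)) : g • sInf T = sInf (g • T) := by
  ext x
  simp only [mem_pointwise_smul_iff_inv_smul_mem, mem_sInf, ← Set.image_smul,
    Set.forall_mem_image]

theorem exists_sInf_smul_le_or_disjoint {K : Subgroup G} (hK : K ≠ ⊥)
    (hfin : (MulAction.orbit α K).Finite) :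
    ∃ T ⊆ MulAction.orbit α K, K ∈ T ∧ sInf T ≠ ⊥ ∧
      ∀ g : α, g • sInf T ≤ K ∨ Disjoint (g • sInf T) K := by
  set Ts := {T | T ⊆ MulAction.orbit α K ∧ K ∈ T ∧ sInf T ≠ ⊥}
  have hTs : Ts.Finite := hfin.finite_subsets.subset fun T hT => hT.1
  obtain ⟨T, ⟨hTorb, hKT, hTbot⟩, hTmax⟩ :=
    hTs.exists_maximalFor Set.ncard Ts ⟨{K}, by simpa [Ts] using hK⟩
  refine ⟨T, hTorb, hKT, hTbot, fun g => or_iff_not_imp_right.2 fun hg => ?_⟩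
  rw [smul_sInf] at hg ⊢
  have hgT : g • T ⊆ MulAction.orbit α K :=
    (Set.smul_set_mono hTorb).trans (MulAction.smul_orbit g K).le
  refine sInf_le (by_contra fun hKgT => ?_)
  have hins : insert K (g • T) ∈ Ts :=
    ⟨Set.insert_subset (MulAction.mem_orbit_self K) hgT, Set.mem_insert _ _,
      by rw [sInf_insert, inf_comm]; exact mt disjoint_iff.2 hg⟩
  have hcard : (insert K (g • T)).ncard = T.ncard + 1 := by
    rw [Set.ncard_insert_of_notMem hKgT (hfin.subset hgT), Set.ncard_smul_set]
  have := hTmax hins (by omega)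
  omega

end Orbit

lemma le_centralizer_of_disjoint {A B : Subgroup G} (hA : A ≤ normalizer (B : Set G))
    (hB : B ≤ normalizer (A : Set G)) (h : Disjoint A B) : A ≤ centralizer (B : Set G) := by
  intro x hx
  rw [mem_centralizer_iff]
  intro k hk
  have hA' : x * k * x⁻¹ * k⁻¹ ∈ A := by
    simpa only [mul_assoc] using
      A.mul_mem hx ((mem_normalizer_iff.1 (hB hk) x⁻¹).1 (A.inv_mem hx))
  have hB' : x * k * x⁻¹ * k⁻¹ ∈ B :=
    B.mul_mem ((mem_normalizer_iff.1 (hA hx) k).1 hk) (B.inv_mem hk)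
  have hcomm : x * k * x⁻¹ * k⁻¹ = 1 := mem_bot.1 (h.le_bot (mem_inf.2 ⟨hA', hB'⟩))
  calc k * x = (x * k * x⁻¹ * k⁻¹)⁻¹ * (x * k) := by group
    _ = x * k := by rw [hcomm, inv_one, one_mul]

lemma mem_centralizer_of_mem_normalizer_of_mem_centralizer {H K : Subgroup G}
    (hHK : H ≤ normalizer (K : Set G)) (hCK : Disjoint H (centralizer (K : Set G))) {q : G}
    (hqH : q ∈ normalizer (H : Set G)) (hqK : q ∈ centralizer (K : Set G)) :
    q ∈ centralizer (H : Set G) := by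
  rw [mem_centralizer_iff]
  intro h hh
  have hH : h * q * h⁻¹ * q⁻¹ ∈ H := by
    simpa only [mul_assoc] using H.mul_mem hh ((mem_normalizer_iff.1 hqH h⁻¹).1 (H.inv_mem hh))
  have hC : h * q * h⁻¹ * q⁻¹ ∈ centralizer (K : Set G) :=
    mul_mem ((mem_normalizer_iff.1 (normalizer_le_normalizer_centralizer K (hHK hh)) q).1 hqK)
      (inv_mem hqK)
  have hcomm : h * q * h⁻¹ * q⁻¹ = 1 := mem_bot.1 (hCK.le_bot (mem_inf.2 ⟨hH, hC⟩))
  calc h * q = (h * q * h⁻¹ * q⁻¹) * (q * h) := by group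
    _ = q * h := by rw [hcomm, one_mul]

section NormalSubgroup

variable {H D : Subgroup G} [D.Normal]

lemma le_normalizer_inf_of_normal (hDH : D ≤ normalizer (H : Set G)) :
    D ≤ normalizer ((H ⊓ D : Subgroup G) : Set G) :=
  (le_inf hDH le_normalizer_of_normal).trans inf_normalizer_le_normalizer_inf

lemma le_centralizer_of_disjoint_inf (hDH : D ≤ normalizer (H : Set G))
    (hCK : Disjoint H (centralizer ((H ⊓ D : Subgroup G) : Set G))) {B : Subgroup G}
    (hBD : B ≤ D) (hDB : D ≤ normalizer (B : Set G)) (hB : Disjoint B (H ⊓ D)) :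
    B ≤ centralizer (H : Set G) := by
  have hHK : H ≤ normalizer ((H ⊓ D : Subgroup G) : Set G) :=
    (le_inf le_normalizer le_normalizer_of_normal).trans inf_normalizer_le_normalizer_inf
  have hBK : B ≤ centralizer ((H ⊓ D : Subgroup G) : Set G) :=
    le_centralizer_of_disjoint (hBD.trans (le_normalizer_inf_of_normal hDH))
      (inf_le_right.trans hDB) hB
  exact fun q hq =>
    mem_centralizer_of_mem_normalizer_of_mem_centralizer hHK hCK (hDH (hBD hq)) (hBK hq)

end NormalSubgroup

end Subgroup

namespace HypH1

open Subgroup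

variable {H D : Subgroup G}

lemma eq_bot_of_disjoint (hH1 : HypH1 G) {P : Subgroup G}
    (hP : (normalizer (P : Set G)).FiniteIndex) [D.FiniteIndex] (h : Disjoint P D) : P = ⊥ :=
  have : D.IsFiniteRelIndex P := isFiniteRelIndex_of_finiteIndex
  hH1 P hP ⟨P ⊓ D, inf_le_left, by rw [inf_relIndex_left]; exact relIndex_ne_zero,
    h.eq_bot ▸ (inferInstance : Group.IsSolvable (⊥ : Subgroup G))⟩

lemma inf_centralizer_eq_bot (hH1 : HypH1 G) {P : Subgroup G}
    (hP : (normalizer (P : Set G)).FiniteIndex) : P ⊓ centralizer (P : Set G) = ⊥ := by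
  have hnorm : normalizer (P : Set G) ≤
      normalizer ((P ⊓ centralizer (P : Set G) : Subgroup G) : Set G) :=
    (le_inf le_rfl (normalizer_le_normalizer_centralizer P)).trans inf_normalizer_le_normalizer_inf
  refine hH1 _ (finiteIndex_of_le hnorm)
    ⟨_, le_rfl, by rw [relIndex_self]; exact one_ne_zero, ?_⟩
  exact Group.isSolvable_of_comm fun a b => Subtype.ext (mem_centralizer_iff.1 b.2.2 a a.2.1)

lemma disjoint_centralizer_inf (hH1 : HypH1 G) [D.Normal] [D.FiniteIndex]
    (hDH : D ≤ normalizer (H : Set G)) :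
    Disjoint H (centralizer ((H ⊓ D : Subgroup G) : Set G)) := by
  have hDK := le_normalizer_inf_of_normal hDH
  have hZ := hH1.inf_centralizer_eq_bot (finiteIndex_of_le hDK)
  have hDC : D ≤
      normalizer ((H ⊓ centralizer ((H ⊓ D : Subgroup G) : Set G) : Subgroup G) : Set G) :=
    (le_inf hDH (hDK.trans (normalizer_le_normalizer_centralizer _))).trans
      inf_normalizer_le_normalizer_inf
  refine disjoint_iff.2 (hH1.eq_bot_of_disjoint (D := D) (finiteIndex_of_le hDC) ?_)
  rw [disjoint_iff, inf_right_comm, hZ]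

theorem exists_normal_le_sup_centralizer (hH1 : HypH1 G)
    (hH : (normalizer (H : Set G)).FiniteIndex) (hHbot : H ≠ ⊥) :
    ∃ N : Subgroup G, N.Normal ∧ N ≠ ⊥ ∧ N ≤ H ⊔ centralizer (H : Set G) := by
  set D := (normalizer (H : Set G)).normalCore
  have hDH : D ≤ normalizer (H : Set G) := normalCore_le _
  have hDK := le_normalizer_inf_of_normal hDH
  have hK : H ⊓ D ≠ ⊥ := fun hK => hHbot (hH1.eq_bot_of_disjoint hH (disjoint_iff.2 hK))
  obtain ⟨T, hTorb, hKT, hTbot, hT⟩ :=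
    exists_sInf_smul_le_or_disjoint hK (finite_orbit_conjAct (finiteIndex_of_le hDK))
  have hDB : D ≤ normalizer ((sInf T : Subgroup G) : Set G) := le_normalizer_sInf fun P hP => by
    obtain ⟨g, rfl⟩ := hTorb hP
    exact le_normalizer_smul hDK g
  refine ⟨normalClosure (sInf T : Subgroup G), inferInstance,
    fun h => hTbot (eq_bot_iff.2 (subset_normalClosure.trans h.le)),
    normalClosure_le_of_forall_smul_le fun g => ?_⟩
  rcases hT g with hle | hdisj
  · exact hle.trans (inf_le_left.trans le_sup_left)
  · have hBD : g • sInf T ≤ D := calc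
      g • sInf T ≤ g • D :=
        pointwise_smul_le_pointwise_smul_iff.2 ((sInf_le hKT).trans inf_le_right)
      _ = D := (normalCore_normal _).conjAct g
    exact (le_centralizer_of_disjoint_inf hDH (hH1.disjoint_centralizer_inf hDH) hBD
      (le_normalizer_smul hDB g) hdisj).trans le_sup_right

end HypH1

theorem statement3 (hH1 : HypH1 G) (hH2 : HypH2 G) (H : Subgroup G)
    (hHL : (Subgroup.normalizer (H : Set G)).FiniteIndex) :
    H ⊓ Subgroup.centralizer (H : Set G) = ⊥ ∧
      ∃ G₀ : Subgroup G, G₀.FiniteIndex ∧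
        ⁅G₀, G₀⁆ ≤ H ⊔ Subgroup.centralizer (H : Set G) := by
  refine ⟨hH1.inf_centralizer_eq_bot hHL, ?_⟩
  by_cases hH : H = ⊥
  · subst hH
    exact ⟨⊤, inferInstance, fun x _ =>
      Subgroup.mem_sup_right (by simp [Subgroup.mem_centralizer_iff])⟩
  obtain ⟨N, hN, hNbot, hNle⟩ := hH1.exists_normal_le_sup_centralizer hHL hH
  obtain ⟨G₀, hG₀, hG₀N⟩ := hH2 N hN hNbot
  exact ⟨G₀, hG₀, hG₀N.trans hNle⟩
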